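/- arXiv:math/0605573 — 3 statements merged into one kernel-verified Lean document; each statement's English description precedes it below -/
import Mathlib

section
/- For every odd positive integer k, every cycle of length k in the symmetric group on k elements is a commutator; equivalently, for the standard k-cycle c = (1 2 … k) in S_k there exist permutations σ, τ ∈ S_k with c = σ τ σ⁻¹ τ⁻¹. -/
/-- For every odd positive integer `k`, every cycle of length `k` in the symmetric
group on `k` elements is a commutator. -/
theorem cycle_of_full_length_is_commutator
    (k : ℕ) (hk : Odd k) (hkpos : 0 < k)
    (c : Equiv.Perm (Fin k)) (hc : c.IsCycle) (hlen : c.support.card = k) :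
    ∃ σ τ : Equiv.Perm (Fin k), c = σ * τ * σ⁻¹ * τ⁻¹ := by
  have hord : orderOf c = k := by rw [hc.orderOf, hlen]
  have hcop : Nat.Coprime 2 (orderOf c) := by
    rw [hord]
    exact Nat.coprime_two_left.mpr hk
  have hc2 : (c ^ 2).IsCycle := hc.pow_iff.mpr hcop
  have hsupp : (c ^ 2).support = c.support := Equiv.Perm.support_pow_coprime hcop
  have hconj : IsConj c (c ^ 2) := hc.isConj hc2 (by rw [hsupp])
  obtain ⟨σ, hσ⟩ := isConj_iff.mp hconj
  refine ⟨σ, c, ?_⟩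
  rw [hσ]; group
end

section
/- For every odd integer k ≥ 3, the standard k-cycle (1 2 … k) in the symmetric group S_k can be written as a product c₁ · c₂ of two permutations, where c₁ and c₂ are each cycles of length (k+1)/2 and c₁ is conjugate in S_k to the inverse of c₂. -/
/-!
Reading a duplicate-free list as the cycle sending each entry to the next, cutting the list
`[0, 1, …, 2M]` at its middle entry `M` factors the standard cycle as
`(0 1 … M) * (M M+1 … 2M)`. Both factors are cycles of length `M + 1`; the inverse of a cycle is
a cycle with the same support, and cycles of equal length are conjugate.
-/

namespace List

variable {α : Type*} [DecidableEq α]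

theorem formPerm_append_cons (l₁ l₂ : List α) (x : α) :
    formPerm (l₁ ++ x :: l₂) = formPerm (l₁ ++ [x]) * formPerm (x :: l₂) := by
  induction l₁ with
  | nil => simp
  | cons a l₁ ih =>
    cases l₁ with
    | nil => simp
    | cons b l₁ => simp only [cons_append, formPerm_cons_cons] at ih ⊢; rw [ih, mul_assoc]

theorem formPerm_eq_formPerm_take_mul_formPerm_drop (l : List α) {n : ℕ} (hn : n < l.length) :
    formPerm l = formPerm (l.take (n + 1)) * formPerm (l.drop n) := by
  conv_lhs => rw [← take_append_drop n l]
  rw [drop_eq_getElem_cons hn, formPerm_append_cons, take_succ_eq_append_getElem hn]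

theorem card_support_formPerm_of_nodup [Fintype α] {l : List α} (hl : l.Nodup)
    (h2 : 2 ≤ l.length) : (formPerm l).support.card = l.length := by
  rw [support_formPerm_of_nodup l hl, toFinset_card_of_nodup hl]
  rintro x rfl
  simp at h2

theorem formPerm_finRange (k : ℕ) : formPerm (finRange k) = finRotate k := by
  ext x
  have hx : x.val < (finRange k).length := by simp
  have h := formPerm_apply_getElem _ (nodup_finRange k) x hx
  have : NeZero k := x.neZero
  simp only [getElem_finRange, Fin.cast_mk, Fin.eta, length_finRange] at h
  rw [h, finRotate_apply]
  simp [Fin.val_add]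

end List

/-- For every odd integer `k ≥ 3`, the standard `k`-cycle in `S_k` is a product
`c₁ * c₂` of two cycles of length `(k+1)/2` with `c₁` conjugate to `c₂⁻¹`. -/
theorem standard_cycle_eq_prod_two_conjugate_cycles
    (k : ℕ) (hk : Odd k) (hk3 : 3 ≤ k) :
    ∃ c₁ c₂ : Equiv.Perm (Fin k),
      finRotate k = c₁ * c₂ ∧
      c₁.IsCycle ∧ c₁.support.card = (k + 1) / 2 ∧
      c₂.IsCycle ∧ c₂.support.card = (k + 1) / 2 ∧
      ∃ σ : Equiv.Perm (Fin k), c₁ = σ * c₂⁻¹ * σ⁻¹ := by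
  obtain ⟨M, rfl⟩ := hk
  set l := List.finRange (2 * M + 1)
  have hl : l.Nodup := List.nodup_finRange _
  have hlen : l.length = 2 * M + 1 := List.length_finRange
  have htake : (l.take (M + 1)).length = (2 * M + 1 + 1) / 2 := by
    rw [List.length_take, hlen]; omega
  have hdrop : (l.drop M).length = (2 * M + 1 + 1) / 2 := by
    rw [List.length_drop, hlen]; omega
  have hl₁ := hl.sublist (List.take_sublist (M + 1) l)
  have hl₂ := hl.sublist (List.drop_sublist M l)
  have hcyc₁ := List.isCycle_formPerm hl₁ (by omega)
  have hcyc₂ := List.isCycle_formPerm hl₂ (by omega)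
  have hcard₁ := (List.card_support_formPerm_of_nodup hl₁ (by omega)).trans htake
  have hcard₂ := (List.card_support_formPerm_of_nodup hl₂ (by omega)).trans hdrop
  obtain ⟨σ, hσ⟩ := isConj_iff.mp <| hcyc₂.inv.isConj hcyc₁ <| by
    rw [Equiv.Perm.support_inv, hcard₁, hcard₂]
  refine ⟨_, _, ?_, hcyc₁, hcard₁, hcyc₂, hcard₂, σ, hσ.symm⟩
  rw [← List.formPerm_finRange,
    List.formPerm_eq_formPerm_take_mul_formPerm_drop l (n := M) (by omega)]
end

section
/- Let x > 2 be a real number and let C′₁ = {z ∈ ℂ : |z − (x/2 + i)| = x/2 − 1}. Then the composition a_x ∘ b, where b(z) = z/(1−z) and a_x(z) = z + x, maps C′₁ into itself: for every z with |z − (x/2 + i)| = x/2 − 1 one has |z/(1−z) + x − (x/2 + i)| = x/2 − 1. -/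
/-!
Put `r = x/2 - 1`, `w = 1 - z` and `a = r - i`. Then `z/(1-z) + x - (x/2 + i) = (1 + a w)/w`,
and the identity `|1 + a w|² = |w + ā|² + (1 - |a|²)(1 - |w|²)`, with `|a|² = r² + 1` and
`|w + ā| = |z - (x/2 + i)| = r`, collapses to `|1 + a w| = r |w|`.
-/

open Complex ComplexConjugate

theorem div_one_sub_add_eq {K : Type*} [Field K] (z t : K) (hz : z ≠ 1) :
    z / (1 - z) + t = (1 + (t - 1) * (1 - z)) / (1 - z) := by
  field_simp [sub_ne_zero.mpr hz.symm]
  ring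

namespace Complex

theorem normSq_one_add_mul (a w : ℂ) :
    normSq (1 + a * w) = normSq (w + conj a) + (1 - normSq a) * (1 - normSq w) := by
  simp only [normSq_apply, add_re, add_im, mul_re, mul_im, conj_re, conj_im, one_re, one_im]
  ring

theorem norm_one_add_mul_of_norm_add_conj {a w : ℂ} {r : ℝ} (hr : 0 ≤ r)
    (ha : ‖a‖ ^ 2 = r ^ 2 + 1) (hw : ‖w + conj a‖ = r) : ‖1 + a * w‖ = r * ‖w‖ := by
  have hsq : ‖1 + a * w‖ ^ 2 = (r * ‖w‖) ^ 2 := by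
    rw [Complex.sq_norm, normSq_one_add_mul, ← Complex.sq_norm, hw, ← Complex.sq_norm, ha,
      ← Complex.sq_norm]
    ring
  exact (sq_eq_sq₀ (norm_nonneg _) (by positivity)).mp hsq

end Complex

theorem ax_comp_b_maps_C1'_into_itself_general
    (x : ℝ) (z : ℂ)
    (hz : ‖z - (x / 2 + I)‖ = x / 2 - 1) :
    ‖z / (1 - z) + x - (x / 2 + I)‖ = x / 2 - 1 := by
  set r := x / 2 - 1 with hr_def
  have hr : 0 ≤ r := hz ▸ norm_nonneg _
  have ha : ‖(r : ℂ) - I‖ ^ 2 = r ^ 2 + 1 := by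
    rw [Complex.sq_norm, normSq_apply]
    simp only [sub_re, sub_im, ofReal_re, ofReal_im, I_re, I_im]
    ring
  have hw : ‖(1 - z) + conj ((r : ℂ) - I)‖ = r := by
    have : 1 - z + conj ((r : ℂ) - I) = -(z - (x / 2 + I)) := by
      rw [map_sub, conj_ofReal, conj_I, hr_def]
      push_cast
      ring
    rw [this, norm_neg, hz]
  have key := norm_one_add_mul_of_norm_add_conj hr ha hw
  -- at `z = 1`, `key` would say `‖1‖ = 0`
  have hz1 : z ≠ 1 := by
    rintro rfl
    simp at key
  have ht : (x : ℂ) - (x / 2 + I) - 1 = r - I := by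
    push_cast [hr_def]
    ring
  rw [add_sub_assoc, div_one_sub_add_eq z _ hz1, ht, norm_div, key,
    mul_div_cancel_right₀ _ (norm_ne_zero_iff.mpr (sub_ne_zero.mpr hz1.symm))]

/-- For `x > 2`, the composition `a_x ∘ b : z ↦ z/(1-z) + x` maps the circle of
center `x/2 + i` and radius `x/2 - 1` into itself. -/
theorem ax_comp_b_maps_C1'_into_itself
    (x : ℝ) (hx : 2 < x) (z : ℂ)
    (hz : ‖z - (x / 2 + I)‖ = x / 2 - 1) :
    ‖z / (1 - z) + x - (x / 2 + I)‖ = x / 2 - 1 :=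
  ax_comp_b_maps_C1'_into_itself_general x z hz
end
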